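/- Let J = S \ {s_i : i ∈ I}. Two valid firing sequences (k_1,…,k_m) and (k'_1,…,k'_{m'}) in the Modified Kostant Game with active set I reach the same configuration if and only if s_{k_m} ⋯ s_{k_1} = s_{k'_{m'}} ⋯ s_{k'_1} in W. Consequently, the map sending a reachable configuration to the Weyl group element s_{k_m} ⋯ s_{k_1} determined by any valid firing sequence reaching it is a well-defined bijection between the set of reachable configurations and W^J. -/

import Mathlib

open scoped Classical RealInnerProductSpace

noncomputable section

variable {n d : ℕ}

/-- The pairing `⟨β, γ^∨⟩ = 2(β,γ)/(γ,γ)` of a vector with a coroot. -/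
def rsPair (β γ : EuclideanSpace ℝ (Fin d)) : ℝ := 2 * ⟪β, γ⟫ / ⟪γ, γ⟫

/-- The coroot `γ^∨ = 2γ/(γ,γ)`. -/
def rsCoroot (γ : EuclideanSpace ℝ (Fin d)) : EuclideanSpace ℝ (Fin d) :=
  (2 / ⟪γ, γ⟫) • γ

/-- `⟨·, γ^∨⟩` as a linear functional. -/
def corootForm (γ : EuclideanSpace ℝ (Fin d)) : EuclideanSpace ℝ (Fin d) →ₗ[ℝ] ℝ where
  toFun x := 2 * ⟪x, γ⟫ / ⟪γ, γ⟫
  map_add' x y := by simp only [inner_add_left]; ring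
  map_smul' c x := by simp only [real_inner_smul_left, RingHom.id_apply, smul_eq_mul]; ring

/-- A finite reduced crystallographic root system in the Euclidean space `ℝ^d`, together with a
chosen base of simple roots `α 0, …, α (n-1)`: every root is an integral linear combination of
the simple roots with all coefficients nonnegative or all nonpositive. -/
structure RootSystemBase (n d : ℕ) : Type where
  Φ : Finset (EuclideanSpace ℝ (Fin d))
  α : Fin n → EuclideanSpace ℝ (Fin d)
  α_mem : ∀ i, α i ∈ Φ
  nonzero : ∀ β ∈ Φ, β ≠ 0
  reduced : ∀ β ∈ Φ, ∀ t : ℝ, t • β ∈ Φ → t = 1 ∨ t = -1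
  crystallographic : ∀ β ∈ Φ, ∀ γ ∈ Φ, ∃ k : ℤ, rsPair β γ = (k : ℝ)
  reflClosed : ∀ β ∈ Φ, ∀ γ ∈ Φ, β - rsPair β γ • γ ∈ Φ
  indep : LinearIndependent ℝ α
  base : ∀ β ∈ Φ, ∃ c : Fin n → ℤ,
    β = ∑ i, (c i : ℝ) • α i ∧ ((∀ i, 0 ≤ c i) ∨ (∀ i, c i ≤ 0))

/-- The extended space `E' = E ⊕ ℝ^I`. -/
abbrev ExtSp (n d : ℕ) (I : Finset (Fin n)) : Type :=
  EuclideanSpace ℝ (Fin d) × ({p : Fin n // p ∈ I} → ℝ)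

/-- The total source vector `β = ∑_{p ∈ I} β_p` in the extended space. -/
def betaVec (n d : ℕ) (I : Finset (Fin n)) : ExtSp n d I := (0, fun _ => 1)

namespace RootSystemBase

variable (R : RootSystemBase n d)

lemma alpha_ne_zero (i : Fin n) : R.α i ≠ 0 := R.nonzero _ (R.α_mem i)

lemma inner_alpha_ne_zero (i : Fin n) : ⟪R.α i, R.α i⟫ ≠ 0 := fun h =>
  R.alpha_ne_zero i ((inner_self_eq_zero (𝕜 := ℝ)).mp h)

lemma corootForm_alpha_self (i : Fin n) : corootForm (R.α i) (R.α i) = 2 := by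
  have h2 := R.inner_alpha_ne_zero i
  show 2 * ⟪R.α i, R.α i⟫ / ⟪R.α i, R.α i⟫ = 2
  rw [mul_div_assoc, div_self h2, mul_one]

/-- The simple reflection `s_i : x ↦ x - ⟨x, α_i^∨⟩ α_i` as a linear automorphism of `E`. -/
def sRefl (i : Fin n) :
    EuclideanSpace ℝ (Fin d) ≃ₗ[ℝ] EuclideanSpace ℝ (Fin d) :=
  Module.reflection (R.corootForm_alpha_self i)

/-- The Weyl group `W`, as the subgroup of linear automorphisms of `E` generated by the
simple reflections. -/
def weyl : Subgroup (EuclideanSpace ℝ (Fin d) ≃ₗ[ℝ] EuclideanSpace ℝ (Fin d)) :=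
  Subgroup.closure (Set.range R.sRefl)

/-- `wordProd [i₁, …, i_t] = s_{i₁} ⋯ s_{i_t}`. -/
def wordProd (l : List (Fin n)) :
    EuclideanSpace ℝ (Fin d) ≃ₗ[ℝ] EuclideanSpace ℝ (Fin d) :=
  (l.map R.sRefl).prod

/-- The Weyl group element `s_{i_t} ⋯ s_{i_1}` associated to the firing sequence
`(i_1, …, i_t)`. -/
def seqProd (l : List (Fin n)) :
    EuclideanSpace ℝ (Fin d) ≃ₗ[ℝ] EuclideanSpace ℝ (Fin d) :=
  (l.reverse.map R.sRefl).prod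

/-- The length function `ℓ` of the Coxeter system `(W, S)`: the minimal number of simple
reflections needed to express `w`. -/
def len (w : EuclideanSpace ℝ (Fin d) ≃ₗ[ℝ] EuclideanSpace ℝ (Fin d)) : ℕ :=
  sInf {t | ∃ l : List (Fin n), l.length = t ∧ R.wordProd l = w}

/-- The set `W^J` of minimal length representatives of `W/W_J`, for `J = S \ {s_i : i ∈ I}`:
those `w ∈ W` with `ℓ(w s_j) > ℓ(w)` for all `j ∉ I`. -/
def minReps (I : Finset (Fin n)) :
    Set (EuclideanSpace ℝ (Fin d) ≃ₗ[ℝ] EuclideanSpace ℝ (Fin d)) :=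
  {w | w ∈ R.weyl ∧ ∀ j, j ∉ I → R.len w < R.len (w * R.sRefl j)}

/-- The Cartan matrix `a_{uv} = ⟨α_u, α_v^∨⟩` (an integer by crystallinity). -/
def cartan (u v : Fin n) : ℤ := ⌊rsPair (R.α u) (R.α v)⌋

/-- The set `Φ⁺` of positive roots. -/
def posRoots : Finset (EuclideanSpace ℝ (Fin d)) :=
  R.Φ.filter fun β => ∃ c : Fin n → ℤ, β = ∑ i, (c i : ℝ) • R.α i ∧ ∀ i, 0 ≤ c i

/-- The set `Φ_P⁺` of positive roots lying in the span of the simple roots `α_j`, `j ∈ P`. -/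
def parPos (P : Finset (Fin n)) : Finset (EuclideanSpace ℝ (Fin d)) :=
  R.posRoots.filter fun β => β ∈ Submodule.span ℝ (R.α '' (P : Set (Fin n)))

/-- `∑_{u ≠ v} (−a_{uv}) c_u + [v ∈ I]`. -/
def chipBound (I : Finset (Fin n)) (c : Fin n → ℤ) (v : Fin n) : ℤ :=
  (∑ u ∈ Finset.univ.erase v, -(R.cartan u v) * c u) + (if v ∈ I then 1 else 0)

/-- Vertex `v` is sad in the configuration `c` (Modified Kostant Game with active set `I`). -/
def Sad (I : Finset (Fin n)) (c : Fin n → ℤ) (v : Fin n) : Prop :=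
  2 * c v < R.chipBound I c v

/-- Firing vertex `v`. -/
def fire (I : Finset (Fin n)) (c : Fin n → ℤ) (v : Fin n) : Fin n → ℤ :=
  Function.update c v (R.chipBound I c v - c v)

end RootSystemBase

/-- `ValidFrom R I c l`: starting from the configuration `c`, the sequence `l` fires a sad
vertex at each step. -/
def RootSystemBase.ValidFrom (R : RootSystemBase n d) (I : Finset (Fin n)) :
    (Fin n → ℤ) → List (Fin n) → Prop
  | _, [] => True
  | c, v :: l => R.Sad I c v ∧ RootSystemBase.ValidFrom R I (R.fire I c v) l

namespace RootSystemBase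

variable (R : RootSystemBase n d)

/-- A valid firing sequence: starts at the zero configuration and fires a sad vertex at
each step. -/
def Valid (I : Finset (Fin n)) (l : List (Fin n)) : Prop := R.ValidFrom I 0 l

/-- The configuration reached after playing the sequence `l` from the zero configuration. -/
def play (I : Finset (Fin n)) (l : List (Fin n)) : Fin n → ℤ :=
  l.foldl (R.fire I) 0

/-- A maximal valid firing sequence: no vertex is sad in the final configuration. -/
def MaximalSeq (I : Finset (Fin n)) (l : List (Fin n)) : Prop :=
  R.Valid I l ∧ ∀ v, ¬ R.Sad I (R.play I l) v

/-- The (integer) coefficients of a vector in the basis of simple coroots, when they exist. -/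
def corootCoeffs (x : EuclideanSpace ℝ (Fin d)) : Fin n → ℤ :=
  if h : ∃ k : Fin n → ℤ, x = ∑ j, (k j : ℝ) • rsCoroot (R.α j) then h.choose else 0

/-- The `I`-height of a (co)vector: the sum over `j ∈ I` of its coefficients in the basis
of simple coroots. -/
def htI (I : Finset (Fin n)) (x : EuclideanSpace ℝ (Fin d)) : ℤ :=
  ∑ j ∈ I, R.corootCoeffs x j

end RootSystemBase

/-- The extended pairing `⟨·, α_i^∨⟩` on `E' = E ⊕ ℝ^I`, determined by
`⟨β_p, α_i^∨⟩ = −δ_{pi}`, as a linear functional. -/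
def extForm (R : RootSystemBase n d) (I : Finset (Fin n)) (i : Fin n) :
    ExtSp n d I →ₗ[ℝ] ℝ :=
  (corootForm (R.α i)).comp (LinearMap.fst ℝ _ _) -
    (if h : i ∈ I then
      (LinearMap.proj (R := ℝ) (φ := fun _ : {p : Fin n // p ∈ I} => ℝ) ⟨i, h⟩).comp
        (LinearMap.snd ℝ _ _)
    else 0)

namespace RootSystemBase

variable (R : RootSystemBase n d)

lemma extForm_apply (I : Finset (Fin n)) (i : Fin n) (x : ExtSp n d I) :
    extForm R I i x = corootForm (R.α i) x.1 - (if h : i ∈ I then x.2 ⟨i, h⟩ else 0) := by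
  by_cases h : i ∈ I <;> simp [extForm, h]

lemma extForm_alpha (I : Finset (Fin n)) (i : Fin n) :
    extForm R I i ((R.α i, 0) : ExtSp n d I) = 2 := by
  rw [R.extForm_apply]
  simp [R.corootForm_alpha_self i]

/-- The simple reflection `s_i : x ↦ x − ⟨x, α_i^∨⟩ α_i` on the extended space `E'`. -/
def extRefl (I : Finset (Fin n)) (i : Fin n) : ExtSp n d I ≃ₗ[ℝ] ExtSp n d I :=
  Module.reflection (R.extForm_alpha I i)

/-- The extended pairing `⟨x, α_i^∨⟩` for `x ∈ E'`. -/
def extPair (I : Finset (Fin n)) (x : ExtSp n d I) (i : Fin n) : ℝ := extForm R I i x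

/-- The action of `s_{i_t} ⋯ s_{i_1}` on the extended space `E'`. -/
def extSeqProd (I : Finset (Fin n)) (l : List (Fin n)) : ExtSp n d I ≃ₗ[ℝ] ExtSp n d I :=
  (l.reverse.map (R.extRefl I)).prod

end RootSystemBase

/-!
Encode a configuration `c` by the vector `λ + ∑ c_u α_u` (`configVec`), where
`⟨λ, α_i^∨⟩ = -[i ∈ I]` (`weight`). Then `v` is sad exactly when this vector pairs negatively
with `α_v`, and firing `v` is the reflection `s_v`; so the sequence `l` reaches the configuration
of `seqProd l λ`.

Call `w` admissible (`PreservesPerpPos`) if it maps every positive root orthogonal to `λ` (the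
positive roots of `W_J`) to a positive root. Along a valid sequence `w` stays admissible: `s_v w`
can only fail at a root `w γ = α_v`, but `w γ ⊥ w λ` while sadness says `⟨w λ, α_v⟩ < 0`. Two
admissible elements with `w λ = w' λ` coincide: otherwise `w⁻¹ w'` fixes `λ` and sends some
`α_j`, `j ∉ I`, to a negative root `-γ` with `γ ⊥ λ`, yet `w γ = -w' α_j` is negative. The
positive roots orthogonal to `λ` are the nonnegative combinations of the `α_j`, `j ∉ I`, so
admissibility means `w α_j > 0` for `j ∉ I`, i.e. `w ∈ W^J`. Every admissible `w ≠ 1` has a left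
descent `s_v` with `⟨w λ, α_v⟩ > 0`: peeling it off leaves an admissible element, and `v` is sad
after it.
-/

theorem LinearIndependent.exists_inner_eq {ι F : Type*} [Fintype ι] [NormedAddCommGroup F]
    [InnerProductSpace ℝ F] {v : ι → F} (hv : LinearIndependent ℝ v) (t : ι → ℝ) :
    ∃ x : F, ∀ i, ⟪x, v i⟫ = t i := by
  let b := Module.Basis.span hv
  have := Module.Finite.of_basis b
  let y := (InnerProductSpace.toDual ℝ _).symm (LinearMap.toContinuousLinearMap (b.constr ℝ t))
  refine ⟨y, fun i => ?_⟩
  have hy := InnerProductSpace.toDual_symm_apply (x := b i)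
    (y := LinearMap.toContinuousLinearMap (b.constr ℝ t))
  rw [LinearMap.coe_toContinuousLinearMap', Module.Basis.constr_basis] at hy
  rw [← hy, Submodule.coe_inner, Module.Basis.coe_span_apply]

namespace RootSystemBase

variable (R : RootSystemBase n d)

local notation "E" => EuclideanSpace ℝ (Fin d)

lemma inner_alpha_self_pos (i : Fin n) : 0 < ⟪R.α i, R.α i⟫ :=
  real_inner_self_pos.mpr (R.alpha_ne_zero i)

lemma sRefl_apply (i : Fin n) (x : E) : R.sRefl i x = x - rsPair x (R.α i) • R.α i := rfl

@[simp]
lemma sRefl_apply_alpha_self (i : Fin n) : R.sRefl i (R.α i) = -R.α i :=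
  Module.reflection_apply_self _

@[simp]
lemma sRefl_sRefl (i : Fin n) (x : E) : R.sRefl i (R.sRefl i x) = x :=
  Module.involutive_reflection _ x

@[simp]
lemma sRefl_mul_self (i : Fin n) : R.sRefl i * R.sRefl i = 1 :=
  LinearEquiv.ext (R.sRefl_sRefl i)

@[simp]
lemma sRefl_inv (i : Fin n) : (R.sRefl i)⁻¹ = R.sRefl i :=
  inv_eq_of_mul_eq_one_right (R.sRefl_mul_self i)

lemma inner_sRefl_sRefl (i : Fin n) (x y : E) : ⟪R.sRefl i x, R.sRefl i y⟫ = ⟪x, y⟫ := by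
  have hq := (R.inner_alpha_self_pos i).ne'
  simp only [sRefl_apply, rsPair, inner_sub_left, inner_sub_right, real_inner_smul_left,
    real_inner_smul_right, real_inner_comm (R.α i)]
  field_simp
  ring

lemma inner_sRefl_alpha_self (i : Fin n) (x : E) : ⟪R.sRefl i x, R.α i⟫ = -⟪x, R.α i⟫ := by
  have h := R.inner_sRefl_sRefl i x (R.α i)
  rw [sRefl_apply_alpha_self, inner_neg_right] at h
  linarith

lemma sRefl_mem (i : Fin n) {β : E} (hβ : β ∈ R.Φ) : R.sRefl i β ∈ R.Φ :=
  R.reflClosed β hβ _ (R.α_mem i)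

@[simp] lemma wordProd_nil : R.wordProd [] = 1 := rfl

@[simp] lemma wordProd_cons (i : Fin n) (L : List (Fin n)) :
    R.wordProd (i :: L) = R.sRefl i * R.wordProd L := List.prod_cons

@[simp] lemma wordProd_append (L L' : List (Fin n)) :
    R.wordProd (L ++ L') = R.wordProd L * R.wordProd L' := by
  simp [wordProd]

lemma seqProd_eq_wordProd_reverse (l : List (Fin n)) : R.seqProd l = R.wordProd l.reverse := rfl

lemma seqProd_append_singleton (l : List (Fin n)) (v : Fin n) :
    R.seqProd (l ++ [v]) = R.sRefl v * R.seqProd l := by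
  simp [seqProd_eq_wordProd_reverse]

lemma sRefl_mem_weyl (i : Fin n) : R.sRefl i ∈ R.weyl :=
  Subgroup.subset_closure ⟨i, rfl⟩

lemma wordProd_mem_weyl (L : List (Fin n)) : R.wordProd L ∈ R.weyl :=
  Subgroup.list_prod_mem _ fun x hx => by
    obtain ⟨i, -, rfl⟩ := List.mem_map.mp hx
    exact R.sRefl_mem_weyl i

lemma mem_weyl_iff {w : E ≃ₗ[ℝ] E} : w ∈ R.weyl ↔ ∃ L, R.wordProd L = w := by
  refine ⟨fun hw => ?_, fun ⟨L, hL⟩ => hL ▸ R.wordProd_mem_weyl L⟩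
  induction hw using Subgroup.closure_induction'' with
  | mem _ h | inv_mem _ h =>
    obtain ⟨i, rfl⟩ := h
    exact ⟨[i], by simp⟩
  | one => exact ⟨[], rfl⟩
  | mul _ _ _ _ h h' =>
    obtain ⟨L, rfl⟩ := h
    obtain ⟨L', rfl⟩ := h'
    exact ⟨L ++ L', R.wordProd_append L L'⟩

lemma seqProd_mem_weyl (l : List (Fin n)) : R.seqProd l ∈ R.weyl :=
  R.wordProd_mem_weyl _

lemma inner_map_map_of_mem_weyl {w : E ≃ₗ[ℝ] E} (hw : w ∈ R.weyl) (x y : E) :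
    ⟪w x, w y⟫ = ⟪x, y⟫ := by
  obtain ⟨L, rfl⟩ := R.mem_weyl_iff.mp hw
  clear hw
  induction L with
  | nil => rfl
  | cons i L ih => simp [R.inner_sRefl_sRefl, ih]

lemma map_mem_of_mem_weyl {w : E ≃ₗ[ℝ] E} (hw : w ∈ R.weyl) {β : E} (hβ : β ∈ R.Φ) :
    w β ∈ R.Φ := by
  obtain ⟨L, rfl⟩ := R.mem_weyl_iff.mp hw
  clear hw
  induction L with
  | nil => exact hβ
  | cons i L ih => simpa using R.sRefl_mem i ih

lemma rsPair_map_map_of_mem_weyl {w : E ≃ₗ[ℝ] E} (hw : w ∈ R.weyl) (x y : E) :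
    rsPair (w x) (w y) = rsPair x y := by
  simp only [rsPair, R.inner_map_map_of_mem_weyl hw]

def posCone : PointedCone ℝ E := PointedCone.hull ℝ (Set.range R.α)

lemma mem_posCone_iff {x : E} :
    x ∈ R.posCone ↔ ∃ c : Fin n → ℝ, (∀ i, 0 ≤ c i) ∧ ∑ i, c i • R.α i = x := by
  rw [posCone, PointedCone.hull, Submodule.mem_span_range_iff_exists_fun]
  constructor
  · rintro ⟨c, rfl⟩
    exact ⟨fun i => c i, fun i => (c i).2, rfl⟩
  · rintro ⟨c, hc, rfl⟩
    exact ⟨fun i => ⟨c i, hc i⟩, rfl⟩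

lemma alpha_mem_posCone (i : Fin n) : R.α i ∈ R.posCone :=
  PointedCone.subset_hull ⟨i, rfl⟩

lemma eq_zero_of_mem_posCone_of_neg_mem {x : E} (hx : x ∈ R.posCone) (hx' : -x ∈ R.posCone) :
    x = 0 := by
  obtain ⟨c, hc, rfl⟩ := R.mem_posCone_iff.mp hx
  obtain ⟨c', hc', hsum⟩ := R.mem_posCone_iff.mp hx'
  have hzero := Fintype.linearIndependent_iffₛ.mp R.indep (c + c') 0 (by
    simp [add_smul, Finset.sum_add_distrib, hsum])
  refine Finset.sum_eq_zero fun i _ => ?_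
  have : c i + c' i = 0 := hzero i
  have : c i = 0 := by linarith [hc i, hc' i]
  simp [this]

protected lemma neg_mem {β : E} (hβ : β ∈ R.Φ) : -β ∈ R.Φ := by
  have h := R.reflClosed β hβ β hβ
  have h2 : rsPair β β = 2 := by
    rw [rsPair, mul_div_assoc, div_self (inner_self_ne_zero.mpr (R.nonzero β hβ)), mul_one]
  rwa [h2, two_smul, sub_add_cancel_left] at h

lemma mem_posRoots_iff {β : E} : β ∈ R.posRoots ↔ β ∈ R.Φ ∧ β ∈ R.posCone := by
  simp only [posRoots, Finset.mem_filter, and_congr_right_iff]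
  intro hβ
  constructor
  · rintro ⟨c, rfl, hc⟩
    exact R.mem_posCone_iff.mpr ⟨_, fun i => mod_cast hc i, rfl⟩
  · intro hcone
    obtain ⟨c, hβc, hc | hc⟩ := R.base β hβ
    · exact ⟨c, hβc, hc⟩
    · refine absurd (R.eq_zero_of_mem_posCone_of_neg_mem hcone ?_) (R.nonzero β hβ)
      refine R.mem_posCone_iff.mpr ⟨fun i => -(c i : ℝ), fun i => by simpa using hc i, ?_⟩
      simp [hβc, Finset.sum_neg_distrib]

lemma mem_posRoots_or_neg_mem {β : E} (hβ : β ∈ R.Φ) : β ∈ R.posRoots ∨ -β ∈ R.posRoots := by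
  obtain ⟨c, hβc, hc | hc⟩ := R.base β hβ
  · exact Or.inl (Finset.mem_filter.mpr ⟨hβ, c, hβc, hc⟩)
  · refine Or.inr (Finset.mem_filter.mpr ⟨R.neg_mem hβ, -c, ?_, fun i => by simpa using hc i⟩)
    simp [hβc, Finset.sum_neg_distrib]

lemma neg_notMem_posRoots {β : E} (hβ : β ∈ R.posRoots) : -β ∉ R.posRoots := fun hneg =>
  R.nonzero β (R.mem_posRoots_iff.mp hβ).1 <|
    R.eq_zero_of_mem_posCone_of_neg_mem (R.mem_posRoots_iff.mp hβ).2 (R.mem_posRoots_iff.mp hneg).2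

lemma alpha_mem_posRoots (i : Fin n) : R.α i ∈ R.posRoots :=
  R.mem_posRoots_iff.mpr ⟨R.α_mem i, R.alpha_mem_posCone i⟩

lemma sRefl_mem_posRoots {β : E} (hβ : β ∈ R.posRoots) {v : Fin n} (hne : β ≠ R.α v) :
    R.sRefl v β ∈ R.posRoots := by
  obtain ⟨hβΦ, hβcone⟩ := R.mem_posRoots_iff.mp hβ
  refine (R.mem_posRoots_or_neg_mem (R.sRefl_mem v hβΦ)).resolve_right fun hneg => hne ?_
  obtain ⟨b, hb, hbsum⟩ := R.mem_posCone_iff.mp (R.mem_posRoots_iff.mp hneg).2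
  obtain ⟨c, hc, hcsum⟩ := R.mem_posCone_iff.mp hβcone
  -- `b + c` are the coefficients of `β - s_v β`, a multiple of `α_v`
  have hcoeff := Fintype.linearIndependent_iffₛ.mp R.indep (b + c)
    (Pi.single v (rsPair β (R.α v))) (by
      simp only [Pi.add_apply, add_smul, Finset.sum_add_distrib, hbsum, hcsum, Pi.single_apply,
        ite_smul, zero_smul, Finset.sum_ite_eq', Finset.mem_univ, if_true, sRefl_apply]
      abel)
  have hβv : β = c v • R.α v := by
    rw [← hcsum]
    refine Finset.sum_eq_single v (fun u _ huv => ?_) (by simp)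
    have : b u + c u = 0 := by simpa [huv] using hcoeff u
    rw [show c u = 0 by linarith [hb u, hc u], zero_smul]
  rcases R.reduced _ (R.α_mem v) (c v) (hβv ▸ hβΦ) with h | h
  · rw [hβv, h, one_smul]
  · linarith [hc v]

lemma wordProd_reverse (L : List (Fin n)) : R.wordProd L.reverse = (R.wordProd L)⁻¹ := by
  induction L with
  | nil => simp
  | cons i L ih => simp [ih]

lemma len_wordProd_le (L : List (Fin n)) : R.len (R.wordProd L) ≤ L.length :=
  Nat.sInf_le ⟨L, rfl, rfl⟩

lemma exists_reduced_word {w : E ≃ₗ[ℝ] E} (hw : w ∈ R.weyl) :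
    ∃ L, R.wordProd L = w ∧ L.length = R.len w := by
  obtain ⟨L₀, hL₀⟩ := R.mem_weyl_iff.mp hw
  obtain ⟨L, hlen, hL⟩ := Nat.sInf_mem (s := {t | ∃ L, L.length = t ∧ R.wordProd L = w})
    ⟨_, L₀, rfl, hL₀⟩
  exact ⟨L, hL, hlen⟩

lemma len_inv (w : E ≃ₗ[ℝ] E) : R.len w⁻¹ = R.len w := by
  have key : ∀ L, R.wordProd L = w⁻¹ ↔ R.wordProd L.reverse = w := fun L => by
    rw [wordProd_reverse, inv_eq_iff_eq_inv]
  unfold len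
  congr 1
  ext t
  constructor
  · rintro ⟨L, rfl, h⟩
    exact ⟨L.reverse, L.length_reverse, (key L).mp h⟩
  · rintro ⟨L, rfl, h⟩
    exact ⟨L.reverse, L.length_reverse, (key L.reverse).mpr (by rwa [List.reverse_reverse])⟩

lemma mul_sRefl_eq_sRefl_mul {w : E ≃ₗ[ℝ] E} (hw : w ∈ R.weyl) {i j : Fin n}
    (h : w (R.α j) = R.α i) : w * R.sRefl j = R.sRefl i * w := by
  ext x
  simp only [LinearEquiv.mul_apply, sRefl_apply, map_sub, map_smul, h]
  rw [← h, R.rsPair_map_map_of_mem_weyl hw]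

/-- The exchange condition. -/
lemma exists_wordProd_eq_mul_sRefl (L : List (Fin n)) {j : Fin n}
    (h : -R.wordProd L (R.α j) ∈ R.posRoots) :
    ∃ L', L'.length + 1 = L.length ∧ R.wordProd L' = R.wordProd L * R.sRefl j := by
  induction L with
  | nil => exact absurd h (R.neg_notMem_posRoots (R.alpha_mem_posRoots j))
  | cons i L ih =>
    rcases R.mem_posRoots_or_neg_mem
      (R.map_mem_of_mem_weyl (R.wordProd_mem_weyl L) (R.α_mem j)) with hpos | hneg
    · have hαi : R.wordProd L (R.α j) = R.α i := by
        by_contra hne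
        rw [wordProd_cons, LinearEquiv.mul_apply] at h
        exact R.neg_notMem_posRoots (R.sRefl_mem_posRoots hpos hne) h
      refine ⟨L, by simp, ?_⟩
      rw [wordProd_cons, mul_assoc, R.mul_sRefl_eq_sRefl_mul (R.wordProd_mem_weyl L) hαi,
        ← mul_assoc, sRefl_mul_self, one_mul]
    · obtain ⟨L', hlen, hL'⟩ := ih hneg
      exact ⟨i :: L', by simp [hlen], by simp [hL', mul_assoc]⟩

lemma len_mul_sRefl_lt {w : E ≃ₗ[ℝ] E} (hw : w ∈ R.weyl) {j : Fin n}
    (h : -w (R.α j) ∈ R.posRoots) : R.len (w * R.sRefl j) < R.len w := by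
  obtain ⟨L, rfl, hlen⟩ := R.exists_reduced_word hw
  obtain ⟨L', hlen', hL'⟩ := R.exists_wordProd_eq_mul_sRefl L h
  have := R.len_wordProd_le L'
  rw [hL'] at this
  omega

lemma len_lt_len_mul_sRefl {w : E ≃ₗ[ℝ] E} (hw : w ∈ R.weyl) {j : Fin n}
    (h : w (R.α j) ∈ R.posRoots) : R.len w < R.len (w * R.sRefl j) := by
  have hw' : w * R.sRefl j ∈ R.weyl := mul_mem hw (R.sRefl_mem_weyl j)
  simpa [mul_assoc] using R.len_mul_sRefl_lt hw' (j := j) (by simpa using h)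

lemma exists_neg_of_ne_one {w : E ≃ₗ[ℝ] E} (hw : w ∈ R.weyl) (h1 : w ≠ 1) :
    ∃ v, -w (R.α v) ∈ R.posRoots := by
  obtain ⟨L, rfl, hlen⟩ := R.exists_reduced_word hw
  obtain ⟨L', v, rfl⟩ := L.eq_nil_or_concat.resolve_left (by rintro rfl; exact h1 rfl)
  rw [List.concat_eq_append] at hw hlen ⊢
  refine ⟨v, (R.mem_posRoots_or_neg_mem (R.map_mem_of_mem_weyl hw (R.α_mem v))).resolve_left
    fun hpos => ?_⟩
  have hlt := R.len_lt_len_mul_sRefl hw hpos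
  have hdrop : R.wordProd (L' ++ [v]) * R.sRefl v = R.wordProd L' := by simp [mul_assoc]
  rw [hdrop] at hlt
  have := R.len_wordProd_le L'
  rw [List.length_append, List.length_singleton] at hlen
  omega

variable (I : Finset (Fin n))

def weight : E :=
  (R.indep.exists_inner_eq fun i => if i ∈ I then -⟪R.α i, R.α i⟫ / 2 else 0).choose

lemma inner_weight_alpha (i : Fin n) :
    ⟪R.weight I, R.α i⟫ = if i ∈ I then -⟪R.α i, R.α i⟫ / 2 else 0 :=
  (R.indep.exists_inner_eq fun i => if i ∈ I then -⟪R.α i, R.α i⟫ / 2 else 0).choose_spec i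

lemma rsPair_weight_alpha (i : Fin n) : rsPair (R.weight I) (R.α i) = -if i ∈ I then 1 else 0 := by
  have := (R.inner_alpha_self_pos i).ne'
  rw [rsPair, inner_weight_alpha]
  split_ifs
  · field_simp
  · simp

lemma inner_weight_alpha_nonpos (i : Fin n) : ⟪R.weight I, R.α i⟫ ≤ 0 := by
  have := R.inner_alpha_self_pos i
  rw [inner_weight_alpha]
  split_ifs <;> linarith

lemma inner_weight_alpha_eq_zero_iff (i : Fin n) : ⟪R.weight I, R.α i⟫ = 0 ↔ i ∉ I := by
  have := R.inner_alpha_self_pos i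
  rw [inner_weight_alpha]
  split_ifs with h
  · simp only [h, not_true_eq_false, iff_false]
    linarith
  · simp [h]

lemma inner_weight_nonpos_of_mem_posCone {x : E} (hx : x ∈ R.posCone) : ⟪R.weight I, x⟫ ≤ 0 := by
  obtain ⟨c, hc, rfl⟩ := R.mem_posCone_iff.mp hx
  simp only [inner_sum, real_inner_smul_right]
  exact Finset.sum_nonpos fun i _ =>
    mul_nonpos_of_nonneg_of_nonpos (hc i) (R.inner_weight_alpha_nonpos I i)

lemma coeff_eq_zero_of_inner_weight_eq_zero {c : Fin n → ℝ} (hc : ∀ i, 0 ≤ c i)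
    (h : ⟪R.weight I, ∑ i, c i • R.α i⟫ = 0) {i : Fin n} (hi : i ∈ I) : c i = 0 := by
  simp only [inner_sum, real_inner_smul_right] at h
  have hterm := (Finset.sum_eq_zero_iff_of_nonpos fun j _ =>
    mul_nonpos_of_nonneg_of_nonpos (hc j) (R.inner_weight_alpha_nonpos I j)).mp h i
    (Finset.mem_univ i)
  exact (mul_eq_zero.mp hterm).resolve_right
    (mt (R.inner_weight_alpha_eq_zero_iff I i).mp (not_not.mpr hi))

def configVec (c : Fin n → ℤ) : E := R.weight I + ∑ u, (c u : ℝ) • R.α u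

lemma configVec_injective : Function.Injective (R.configVec I) := by
  intro c c' h
  have := Fintype.linearIndependent_iffₛ.mp R.indep _ _ (add_left_cancel h)
  exact funext fun u => by exact_mod_cast this u

lemma cartan_cast (u v : Fin n) : (R.cartan u v : ℝ) = rsPair (R.α u) (R.α v) := by
  obtain ⟨k, hk⟩ := R.crystallographic _ (R.α_mem u) _ (R.α_mem v)
  rw [cartan, hk, Int.floor_intCast]

lemma cartan_self (v : Fin n) : R.cartan v v = 2 := by
  exact_mod_cast (R.cartan_cast v v).trans (R.corootForm_alpha_self v)

lemma rsPair_configVec (c : Fin n → ℤ) (v : Fin n) :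
    rsPair (R.configVec I c) (R.α v) = ((2 * c v - R.chipBound I c v : ℤ) : ℝ) := by
  change corootForm (R.α v) _ = _
  simp only [configVec, map_add, map_sum, map_smul, smul_eq_mul]
  change rsPair _ _ + ∑ u, (c u : ℝ) * rsPair _ _ = _
  rw [rsPair_weight_alpha, ← Finset.add_sum_erase _ _ (Finset.mem_univ v), chipBound]
  simp only [← cartan_cast]
  rw [cartan_self]
  push_cast
  simp only [mul_neg, Finset.sum_neg_distrib, mul_comm]
  ring

lemma sad_iff (c : Fin n → ℤ) (v : Fin n) : R.Sad I c v ↔ ⟪R.configVec I c, R.α v⟫ < 0 := by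
  rw [Sad, ← sub_neg, ← Int.cast_lt_zero (R := ℝ), ← R.rsPair_configVec, rsPair,
    div_lt_iff₀ (R.inner_alpha_self_pos v), zero_mul]
  constructor <;> intro <;> linarith

lemma configVec_fire (c : Fin n → ℤ) (v : Fin n) :
    R.configVec I (R.fire I c v) = R.sRefl v (R.configVec I c) := by
  have hfire : R.fire I c v = c + Pi.single v (R.chipBound I c v - 2 * c v) := by
    ext u
    rcases eq_or_ne u v with rfl | h <;> simp [fire, *]
    ring
  rw [hfire, sRefl_apply, rsPair_configVec, configVec, configVec]
  simp only [Pi.add_apply, Int.cast_add, add_smul, Finset.sum_add_distrib, Pi.single_apply,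
    Int.cast_ite, Int.cast_zero, ite_smul, zero_smul, Finset.sum_ite_eq', Finset.mem_univ, if_true]
  push_cast
  module

lemma play_append_singleton (l : List (Fin n)) (v : Fin n) :
    R.play I (l ++ [v]) = R.fire I (R.play I l) v := by
  rw [play, play, List.foldl_append, List.foldl_cons, List.foldl_nil]

lemma configVec_play (l : List (Fin n)) :
    R.configVec I (R.play I l) = R.seqProd l (R.weight I) := by
  induction l using List.reverseRecOn with
  | nil => simp [configVec, play, seqProd]
  | append_singleton l v ih =>
    rw [play_append_singleton, configVec_fire, ih, seqProd_append_singleton,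
      LinearEquiv.mul_apply]

lemma validFrom_append_singleton_iff (c : Fin n → ℤ) (l : List (Fin n)) (v : Fin n) :
    R.ValidFrom I c (l ++ [v]) ↔ R.ValidFrom I c l ∧ R.Sad I (l.foldl (R.fire I) c) v := by
  induction l generalizing c with
  | nil => simp [ValidFrom]
  | cons u l ih => simp [ValidFrom, ih, and_assoc]

lemma valid_append_singleton_iff (l : List (Fin n)) (v : Fin n) :
    R.Valid I (l ++ [v]) ↔ R.Valid I l ∧ R.Sad I (R.play I l) v :=
  R.validFrom_append_singleton_iff I 0 l v

def PreservesPerpPos (w : E ≃ₗ[ℝ] E) : Prop :=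
  ∀ γ ∈ R.posRoots, ⟪R.weight I, γ⟫ = 0 → w γ ∈ R.posRoots

lemma preservesPerpPos_sRefl_mul {w : E ≃ₗ[ℝ] E} (hw : w ∈ R.weyl) (hP : R.PreservesPerpPos I w)
    {v : Fin n} (hv : ⟪w (R.weight I), R.α v⟫ ≠ 0) : R.PreservesPerpPos I (R.sRefl v * w) := by
  intro γ hγ hγ0
  refine R.sRefl_mem_posRoots (hP γ hγ hγ0) fun h => hv ?_
  rw [← h, R.inner_map_map_of_mem_weyl hw, hγ0]

lemma preservesPerpPos_seqProd {l : List (Fin n)} (hl : R.Valid I l) :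
    R.PreservesPerpPos I (R.seqProd l) := by
  induction l using List.reverseRecOn with
  | nil => intro γ hγ _; simpa [seqProd] using hγ
  | append_singleton l v ih =>
    obtain ⟨hl, hsad⟩ := (R.valid_append_singleton_iff I l v).mp hl
    rw [seqProd_append_singleton]
    refine R.preservesPerpPos_sRefl_mul I (R.seqProd_mem_weyl l) (ih hl) ?_
    rw [← configVec_play]
    exact ((R.sad_iff I _ v).mp hsad).ne

lemma eq_of_preservesPerpPos {w w' : E ≃ₗ[ℝ] E} (hw : w ∈ R.weyl) (hw' : w' ∈ R.weyl)
    (hP : R.PreservesPerpPos I w) (hP' : R.PreservesPerpPos I w')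
    (h : w (R.weight I) = w' (R.weight I)) : w = w' := by
  set u := w⁻¹ * w'
  have hu : u ∈ R.weyl := mul_mem (inv_mem hw) hw'
  have hufix : u (R.weight I) = R.weight I := by simp [u, ← h]
  by_contra hne
  obtain ⟨v, hv⟩ := R.exists_neg_of_ne_one hu fun h1 => hne (inv_mul_eq_one.mp h1)
  have hvu : ⟪R.weight I, -u (R.α v)⟫ = -⟪R.weight I, R.α v⟫ := by
    rw [inner_neg_right, ← R.inner_map_map_of_mem_weyl hu (R.weight I) (R.α v), hufix]
  have hv0 : ⟪R.weight I, R.α v⟫ = 0 := by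
    linarith [R.inner_weight_nonpos_of_mem_posCone I (R.mem_posRoots_iff.mp hv).2,
      R.inner_weight_alpha_nonpos I v]
  have hneg := hP _ hv (by rw [hvu, hv0, neg_zero])
  simp only [u, map_neg, LinearEquiv.mul_apply, LinearEquiv.coe_inv,
    LinearEquiv.apply_symm_apply] at hneg
  exact R.neg_notMem_posRoots (hP' _ (R.alpha_mem_posRoots v) hv0) hneg

lemma play_eq_play_iff {l l' : List (Fin n)} (hl : R.Valid I l) (hl' : R.Valid I l') :
    R.play I l = R.play I l' ↔ R.seqProd l = R.seqProd l' := by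
  rw [← (R.configVec_injective I).eq_iff, configVec_play, configVec_play]
  exact ⟨R.eq_of_preservesPerpPos I (R.seqProd_mem_weyl l) (R.seqProd_mem_weyl l')
    (R.preservesPerpPos_seqProd I hl) (R.preservesPerpPos_seqProd I hl'), fun h => h ▸ rfl⟩

lemma preservesPerpPos_of_mem_minReps {w : E ≃ₗ[ℝ] E} (hw : w ∈ R.weyl)
    (hmin : ∀ j, j ∉ I → R.len w < R.len (w * R.sRefl j)) : R.PreservesPerpPos I w := by
  have hpos : ∀ j ∉ I, w (R.α j) ∈ R.posRoots := fun j hj =>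
    (R.mem_posRoots_or_neg_mem (R.map_mem_of_mem_weyl hw (R.α_mem j))).resolve_right
      fun hneg => lt_asymm (hmin j hj) (R.len_mul_sRefl_lt hw hneg)
  intro γ hγ hγ0
  obtain ⟨hγΦ, hγcone⟩ := R.mem_posRoots_iff.mp hγ
  obtain ⟨c, hc, rfl⟩ := R.mem_posCone_iff.mp hγcone
  refine R.mem_posRoots_iff.mpr ⟨R.map_mem_of_mem_weyl hw hγΦ, ?_⟩
  rw [map_sum]
  refine Submodule.sum_mem _ fun j _ => ?_
  rw [map_smul]
  by_cases hj : j ∈ I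
  · rw [R.coeff_eq_zero_of_inner_weight_eq_zero I hc hγ0 hj, zero_smul]
    exact zero_mem _
  · exact R.posCone.smul_mem (hc j) (R.mem_posRoots_iff.mp (hpos j hj)).2

lemma mem_minReps_iff {w : E ≃ₗ[ℝ] E} :
    w ∈ R.minReps I ↔ w ∈ R.weyl ∧ R.PreservesPerpPos I w :=
  ⟨fun ⟨hw, hmin⟩ => ⟨hw, R.preservesPerpPos_of_mem_minReps I hw hmin⟩, fun ⟨hw, hP⟩ =>
    ⟨hw, fun j hj => R.len_lt_len_mul_sRefl hw
      (hP _ (R.alpha_mem_posRoots j) ((R.inner_weight_alpha_eq_zero_iff I j).mpr hj))⟩⟩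

lemma exists_valid_seqProd_eq {w : E ≃ₗ[ℝ] E} (hw : w ∈ R.weyl) (hP : R.PreservesPerpPos I w) :
    ∃ l, R.Valid I l ∧ R.seqProd l = w := by
  induction hlen : R.len w using Nat.strong_induction_on generalizing w with
  | _ N ih =>
  rcases eq_or_ne w 1 with rfl | hne
  · exact ⟨[], trivial, rfl⟩
  obtain ⟨v, hv⟩ := R.exists_neg_of_ne_one (inv_mem hw) (inv_ne_one.mpr hne)
  have hpos : 0 < ⟪w (R.weight I), R.α v⟫ := by
    have heq : ⟪w (R.weight I), R.α v⟫ = -⟪R.weight I, -w⁻¹ (R.α v)⟫ := by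
      rw [inner_neg_right, neg_neg, ← R.inner_map_map_of_mem_weyl hw _ (w⁻¹ _), LinearEquiv.coe_inv,
        LinearEquiv.apply_symm_apply]
    rw [heq, neg_pos]
    refine lt_of_le_of_ne (R.inner_weight_nonpos_of_mem_posCone I (R.mem_posRoots_iff.mp hv).2)
      fun h0 => ?_
    have := hP _ hv h0
    simp only [map_neg, LinearEquiv.coe_inv, LinearEquiv.apply_symm_apply] at this
    exact R.neg_notMem_posRoots (R.alpha_mem_posRoots v) this
  have hw' : R.sRefl v * w ∈ R.weyl := mul_mem (R.sRefl_mem_weyl v) hw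
  have hlt : R.len (R.sRefl v * w) < N := by
    rw [← hlen, ← R.len_inv, ← R.len_inv w, mul_inv_rev, sRefl_inv]
    exact R.len_mul_sRefl_lt (inv_mem hw) hv
  obtain ⟨l, hl, hlw⟩ := ih _ hlt hw' (R.preservesPerpPos_sRefl_mul I hw hP hpos.ne') rfl
  refine ⟨l ++ [v], (R.valid_append_singleton_iff I l v).mpr ⟨hl, ?_⟩, ?_⟩
  · rw [sad_iff, configVec_play, hlw, LinearEquiv.mul_apply, inner_sRefl_alpha_self]
    linarith
  · rw [seqProd_append_singleton, hlw, ← mul_assoc, sRefl_mul_self, one_mul]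

end RootSystemBase

/-- Two valid firing sequences reach the same configuration iff they define
the same Weyl group element; consequently reachable configurations biject with `W^J`. -/
theorem statement2 {n d : ℕ} (R : RootSystemBase n d) (I : Finset (Fin n)) :
    (∀ l l' : List (Fin n), R.Valid I l → R.Valid I l' →
      (R.play I l = R.play I l' ↔ R.seqProd l = R.seqProd l')) ∧
    ∃ F : (Fin n → ℤ) → (EuclideanSpace ℝ (Fin d) ≃ₗ[ℝ] EuclideanSpace ℝ (Fin d)),
      (∀ l : List (Fin n), R.Valid I l → F (R.play I l) = R.seqProd l) ∧
      Set.BijOn F {c | ∃ l : List (Fin n), R.Valid I l ∧ R.play I l = c} (R.minReps I) := by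
  let F : (Fin n → ℤ) → (EuclideanSpace ℝ (Fin d) ≃ₗ[ℝ] EuclideanSpace ℝ (Fin d)) := fun c =>
    if h : ∃ l, R.Valid I l ∧ R.play I l = c then R.seqProd h.choose else 1
  have hF : ∀ l, R.Valid I l → F (R.play I l) = R.seqProd l := fun l hl => by
    have h : ∃ l', R.Valid I l' ∧ R.play I l' = R.play I l := ⟨l, hl, rfl⟩
    simp only [F, dif_pos h]
    exact (R.play_eq_play_iff I h.choose_spec.1 hl).mp h.choose_spec.2
  refine ⟨fun l l' => R.play_eq_play_iff I, F, hF, ?_, ?_, ?_⟩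
  · rintro _ ⟨l, hl, rfl⟩
    rw [hF l hl]
    exact (R.mem_minReps_iff I).mpr ⟨R.seqProd_mem_weyl l, R.preservesPerpPos_seqProd I hl⟩
  · rintro _ ⟨l, hl, rfl⟩ _ ⟨l', hl', rfl⟩ h
    rw [hF l hl, hF l' hl'] at h
    exact (R.play_eq_play_iff I hl hl').mpr h
  · intro w hw
    obtain ⟨hweyl, hP⟩ := (R.mem_minReps_iff I).mp hw
    obtain ⟨l, hl, rfl⟩ := R.exists_valid_seqProd_eq I hweyl hP
    exact ⟨_, ⟨l, hl, rfl⟩, hF l hl⟩
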